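/- arXiv:2103.03639 — 3 statements merged into one kernel-verified Lean document; each statement's English description precedes it below -/
import Mathlib

section
/- Let h(x) = c_0 + c_1 x + ... + c_n x^n be a real polynomial of degree at most n with nonnegative coefficients c_0, ..., c_n. Then the polynomial 𝒟_n(h) has only real roots. -/
/-!
Write `𝒟ₙ(h) = ∑ cᵢ Aₙᵢ` with `Aₙᵢ = 𝒟ₙ(xⁱ(1+x)ⁿ⁻ⁱ)`; these satisfy
`Aₙ₊₁ᵢ = x ∑_{j<i} Aₙⱼ + ∑_{i≤j≤n} Aₙⱼ`. Fix `z` with `Im z > 0`, so `φ = arg z ∈ (0, π)`.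
By induction on `n`, the values `Aₙ₀(z), …, Aₙₙ(z)` are nonzero with angles
`θ₀ ≤ ⋯ ≤ θₙ ≤ θ₀ + φ`. Indeed, the recurrence writes each new value as a sum of vectors in a
sector of opening at most `φ < π`, which locates its angle, and
`Aₙ₊₁,ᵢ₊₁ = Aₙ₊₁ᵢ + (z - 1) Aₙᵢ` adds to `Aₙ₊₁ᵢ(z)` a vector turned counterclockwise from it
by less than `π`, so the angle increases. Hence a nonzero nonnegative combination of the
`Aₙᵢ(z)` lies in a sector of opening `< π` and does not vanish; by conjugation, `𝒟ₙ(h)` has no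
nonreal root.
-/

open Polynomial PowerSeries Finset

noncomputable section

/-- A real polynomial is *real-rooted* if it is the zero polynomial or
all of its (complex) roots are real. -/
def RealRooted (p : Polynomial ℝ) : Prop :=
  p = 0 ∨ ∀ z ∈ (p.map (algebraMap ℝ ℂ)).roots, z.im = 0

/-- The number of real roots of `p`, counted with multiplicity, that are `≥ t`. -/
def rootsGe (p : Polynomial ℝ) (t : ℝ) : ℕ :=
  (p.roots.filter fun x => t ≤ x).card

/-- `Interlaces p q`: both `p` and `q` are real-rooted and, writing the roots of `p`
as α₁ ≥ α₂ ≥ ⋯ and those of `q` as β₁ ≥ β₂ ≥ ⋯, one has ⋯ ≤ α₂ ≤ β₂ ≤ α₁ ≤ β₁;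
equivalently (and this is the formulation used here), for every `t` the number of
roots of `q` that are `≥ t` exceeds the corresponding number for `p` by `0` or `1`.
By convention the zero polynomial interlaces and is interlaced by every
real-rooted polynomial. -/
def Interlaces (p q : Polynomial ℝ) : Prop :=
  RealRooted p ∧ RealRooted q ∧
    (p = 0 ∨ q = 0 ∨ ∀ t : ℝ, rootsGe q t = rootsGe p t ∨ rootsGe q t = rootsGe p t + 1)

/-- `(a, b)` is the symmetric decomposition of `p` with respect to `n`:
`p = a + x·b`, `a` has degree at most `n` with `xⁿ·a(1/x) = a(x)`, and `b` has
degree at most `n − 1` with `x^(n−1)·b(1/x) = b(x)`. -/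
def IsSymmDecomp (n : ℕ) (p a b : Polynomial ℝ) : Prop :=
  p = a + Polynomial.X * b ∧ a.natDegree ≤ n ∧ b.natDegree ≤ n - 1 ∧
    (∀ i ≤ n, a.coeff (n - i) = a.coeff i) ∧
    (∀ i ≤ n - 1, b.coeff (n - 1 - i) = b.coeff i)

/-- `p` has a nonnegative, real-rooted symmetric decomposition with respect to `n`. -/
def HasNonnegRealRootedSymmDecomp (n : ℕ) (p : Polynomial ℝ) : Prop :=
  ∃ a b : Polynomial ℝ, IsSymmDecomp n p a b ∧
    (∀ i, 0 ≤ a.coeff i) ∧ (∀ i, 0 ≤ b.coeff i) ∧ RealRooted a ∧ RealRooted b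

/-- `p` has a nonnegative, real-rooted and interlacing symmetric decomposition
with respect to `n` (interlacing: `a` is interlaced by `b`). -/
def HasInterlacingSymmDecomp (n : ℕ) (p : Polynomial ℝ) : Prop :=
  ∃ a b : Polynomial ℝ, IsSymmDecomp n p a b ∧
    (∀ i, 0 ≤ a.coeff i) ∧ (∀ i, 0 ≤ b.coeff i) ∧ RealRooted a ∧ RealRooted b ∧
    Interlaces b a

section Sectors

open Complex
open scoped Real

-- Angles are real numbers, not reduced modulo `2π`, so that they can be ordered.
def HasAngle (θ : ℝ) (w : ℂ) : Prop :=
  ∃ r : ℝ, 0 < r ∧ w = r * exp (θ * I)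

def InSector (a b : ℝ) (w : ℂ) : Prop :=
  ∃ θ ∈ Set.Icc a b, HasAngle θ w

variable {θ η a b c : ℝ} {u w : ℂ}

theorem hasAngle_exp (θ : ℝ) : HasAngle θ (exp (θ * I)) :=
  ⟨1, one_pos, by simp⟩

theorem hasAngle_arg (hw : w ≠ 0) : HasAngle (arg w) w :=
  ⟨‖w‖, norm_pos_iff.2 hw, (norm_mul_exp_arg_mul_I w).symm⟩

namespace HasAngle

theorem ne_zero (h : HasAngle θ w) : w ≠ 0 := by
  obtain ⟨r, hr, rfl⟩ := h
  exact mul_ne_zero (ofReal_ne_zero.2 hr.ne') (exp_ne_zero _)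

theorem ofReal_mul (h : HasAngle θ w) {r : ℝ} (hr : 0 < r) : HasAngle θ (r * w) := by
  obtain ⟨s, hs, rfl⟩ := h
  exact ⟨r * s, mul_pos hr hs, by push_cast; ring⟩

theorem mul (hu : HasAngle θ u) (hw : HasAngle η w) : HasAngle (θ + η) (u * w) := by
  obtain ⟨r, hr, rfl⟩ := hu
  obtain ⟨s, hs, rfl⟩ := hw
  refine ⟨r * s, mul_pos hr hs, ?_⟩
  push_cast
  rw [add_mul, exp_add]
  ring

theorem mul_exp_neg (h : HasAngle θ w) (c : ℝ) : HasAngle (θ - c) (w * exp (-c * I)) := by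
  simpa [sub_eq_add_neg] using h.mul (hasAngle_exp (-c))

theorem re_eq (h : HasAngle θ w) : w.re = ‖w‖ * Real.cos θ := by
  obtain ⟨r, hr, rfl⟩ := h
  rw [re_ofReal_mul, exp_ofReal_mul_I_re, norm_mul, norm_exp_ofReal_mul_I, norm_real,
    Real.norm_of_nonneg hr.le, mul_one]

theorem im_eq (h : HasAngle θ w) : w.im = ‖w‖ * Real.sin θ := by
  obtain ⟨r, hr, rfl⟩ := h
  rw [im_ofReal_mul, exp_ofReal_mul_I_im, norm_mul, norm_exp_ofReal_mul_I, norm_real,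
    Real.norm_of_nonneg hr.le, mul_one]

theorem re_pos (h : HasAngle θ w) (h₁ : -(π / 2) < θ) (h₂ : θ < π / 2) : 0 < w.re := by
  rw [h.re_eq]
  exact mul_pos (norm_pos_iff.2 h.ne_zero) (Real.cos_pos_of_mem_Ioo ⟨h₁, h₂⟩)

theorem im_nonneg (h : HasAngle θ w) (h₁ : 0 ≤ θ) (h₂ : θ ≤ π) : 0 ≤ w.im := by
  rw [h.im_eq]
  exact mul_nonneg (norm_nonneg _) (Real.sin_nonneg_of_nonneg_of_le_pi h₁ h₂)

theorem im_nonpos (h : HasAngle θ w) (h₁ : -π ≤ θ) (h₂ : θ ≤ 0) : w.im ≤ 0 := by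
  rw [h.im_eq]
  exact mul_nonpos_of_nonneg_of_nonpos (norm_nonneg _)
    (Real.sin_nonpos_of_nonpos_of_neg_pi_le h₂ h₁)

theorem im_pos (h : HasAngle θ w) (h₁ : 0 < θ) (h₂ : θ < π) : 0 < w.im := by
  rw [h.im_eq]
  exact mul_pos (norm_pos_iff.2 h.ne_zero) (Real.sin_pos_of_pos_of_lt_pi h₁ h₂)

theorem im_neg (h : HasAngle θ w) (h₁ : -π < θ) (h₂ : θ < 0) : w.im < 0 := by
  rw [h.im_eq]
  exact mul_neg_of_pos_of_neg (norm_pos_iff.2 h.ne_zero)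
    (Real.sin_neg_of_neg_of_neg_pi_lt h₂ h₁)

end HasAngle

def angleNear (c : ℝ) (w : ℂ) : ℝ :=
  c + arg (w * exp (-c * I))

theorem hasAngle_angleNear (hw : w ≠ 0) (c : ℝ) : HasAngle (angleNear c w) w := by
  have hq : w * exp (-c * I) ≠ 0 := mul_ne_zero hw (exp_ne_zero _)
  simpa [angleNear, mul_assoc, ← exp_add, add_comm] using (hasAngle_arg hq).mul (hasAngle_exp c)

theorem HasAngle.angleNear_eq (h : HasAngle θ w) (h₁ : c - π < θ) (h₂ : θ ≤ c + π) :
    angleNear c w = θ := by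
  obtain ⟨r, hr, hw⟩ := h.mul_exp_neg c
  rw [angleNear, hw, arg_real_mul _ hr, arg_exp_mul_I,
    (toIocMod_eq_self _).2 ⟨by linarith, by linarith⟩]
  ring

theorem InSector.ne_zero (h : InSector a b w) : w ≠ 0 :=
  h.elim fun _ hθ => hθ.2.ne_zero

theorem InSector.angleNear_mem (h : InSector a b w) (ha : c - π < a) (hb : b ≤ c + π) :
    angleNear c w ∈ Set.Icc a b := by
  obtain ⟨θ, hθ, hw⟩ := h
  rwa [hw.angleNear_eq (by linarith [hθ.1]) (by linarith [hθ.2])]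

/-- Linear description of a sector of opening `< π`: the inequality on the bisector excludes `0`
and the direction opposite to the sector. -/
theorem inSector_iff (hab : a ≤ b) (hπ : b - a < π) :
    InSector a b w ↔ 0 < (w * exp (-((a + b) / 2 : ℝ) * I)).re ∧
      0 ≤ (w * exp (-a * I)).im ∧ (w * exp (-b * I)).im ≤ 0 := by
  constructor
  · rintro ⟨θ, ⟨haθ, hθb⟩, hθ⟩
    exact ⟨(hθ.mul_exp_neg _).re_pos (by linarith) (by linarith),
      (hθ.mul_exp_neg a).im_nonneg (by linarith) (by linarith),
      (hθ.mul_exp_neg b).im_nonpos (by linarith) (by linarith)⟩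
  · rintro ⟨hre, ha, hb⟩
    set c : ℝ := (a + b) / 2 with hc_def
    have hq : w * exp (-c * I) ≠ 0 := fun h0 => by rw [h0, zero_re] at hre; exact hre.false
    have harg := abs_lt.1 (abs_arg_lt_pi_div_two_iff.2 (Or.inl hre))
    have hθ := hasAngle_angleNear (left_ne_zero_of_mul hq) c
    have hc : angleNear c w - c = arg (w * exp (-c * I)) := by rw [angleNear]; ring
    refine ⟨angleNear c w, ⟨?_, ?_⟩, hθ⟩
    · by_contra! hlt
      exact (((hθ.mul_exp_neg a).im_neg (by linarith) (by linarith)).not_ge ha)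
    · by_contra! hlt
      exact (((hθ.mul_exp_neg b).im_pos (by linarith) (by linarith)).not_ge hb)

theorem InSector.add (hπ : b - a < π) (hu : InSector a b u) (hw : InSector a b w) :
    InSector a b (u + w) := by
  have hab : a ≤ b := let ⟨_, hθ, _⟩ := hu; hθ.1.trans hθ.2
  rw [inSector_iff hab hπ] at *
  simp only [add_mul, add_re, add_im]
  exact ⟨add_pos hu.1 hw.1, add_nonneg hu.2.1 hw.2.1, add_nonpos hu.2.2 hw.2.2⟩

theorem inSector_sum {ι : Type*} {s : Finset ι} {f : ι → ℂ} (hπ : b - a < π) (hs : s.Nonempty)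
    (hf : ∀ i ∈ s, InSector a b (f i)) : InSector a b (∑ i ∈ s, f i) := by
  induction hs using Finset.Nonempty.cons_induction with
  | singleton i => simpa using hf i (mem_singleton_self i)
  | cons i s hi hs ih =>
    rw [sum_cons]
    exact (hf i (mem_cons_self i s)).add hπ (ih fun j hj => hf j (mem_cons_of_mem hj))

end Sectors

section EulerStep

variable {R : Type*} (x : R) (n : ℕ) (v : ℕ → R)

def eulerStep [Semiring R] (i : ℕ) : R :=
  x * ∑ j ∈ range i, v j + ∑ j ∈ Ico i (n + 1), v j

theorem eulerStep_zero [Semiring R] : eulerStep x n v 0 = ∑ j ∈ range (n + 1), v j := by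
  rw [eulerStep, range_zero, sum_empty, mul_zero, zero_add, range_eq_Ico]

theorem eulerStep_last [Semiring R] : eulerStep x n v (n + 1) = x * eulerStep x n v 0 := by
  rw [eulerStep, Ico_self, sum_empty, add_zero, eulerStep_zero]

theorem eulerStep_succ [Ring R] {i : ℕ} (hi : i ≤ n) :
    eulerStep x n v (i + 1) = eulerStep x n v i + (x - 1) * v i := by
  rw [eulerStep, eulerStep, sum_range_succ, sum_eq_sum_Ico_succ_bot (by omega : i < n + 1)]
  noncomm_ring

theorem map_eulerStep {S F : Type*} [Semiring R] [Semiring S] [FunLike F R S]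
    [RingHomClass F R S] (f : F) (i : ℕ) :
    f (eulerStep x n v i) = eulerStep (f x) n (fun j => f (v j)) i := by
  simp [eulerStep, map_sum]

theorem eulerStep_congr [Semiring R] {u : ℕ → R} (h : ∀ j ≤ n, v j = u j) {i : ℕ}
    (hi : i ≤ n + 1) : eulerStep x n v i = eulerStep x n u i := by
  have hlow : ∑ j ∈ range i, v j = ∑ j ∈ range i, u j :=
    sum_congr rfl fun j hj => h j (by have := mem_range.1 hj; omega)
  have hhigh : ∑ j ∈ Ico i (n + 1), v j = ∑ j ∈ Ico i (n + 1), u j :=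
    sum_congr rfl fun j hj => h j (by have := (mem_Ico.1 hj).2; omega)
  rw [eulerStep, eulerStep, hlow, hhigh]

theorem eulerStep_const_mul [CommSemiring R] (a : R) (i : ℕ) :
    eulerStep x n (fun j => a * v j) i = a * eulerStep x n v i := by
  rw [eulerStep, eulerStep, ← mul_sum, ← mul_sum]
  ring

end EulerStep

section MonotoneAngles

open Complex
open scoped Real

variable {a b : ℝ} {w z : ℂ}

theorem InSector.mono {a' b' : ℝ} (h : InSector a b w) (ha : a' ≤ a) (hb : b ≤ b') :
    InSector a' b' w :=
  let ⟨θ, hθ, hw⟩ := h; ⟨θ, ⟨ha.trans hθ.1, hθ.2.trans hb⟩, hw⟩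

theorem arg_pos_of_im_pos (hz : 0 < z.im) : 0 < arg z :=
  (arg_nonneg_iff.2 hz.le).lt_of_ne fun h => hz.ne' (arg_eq_zero_iff.1 h.symm).2

theorem arg_lt_pi_of_im_pos (hz : 0 < z.im) : arg z < π :=
  arg_lt_pi_iff.2 (Or.inr hz.ne')

theorem exists_hasAngle_sub_one (hz : 0 < z.im) :
    ∃ ψ, arg z ≤ ψ ∧ ψ < π ∧ HasAngle ψ (z - 1) := by
  have hz0 : z ≠ 0 := fun h => by simp [h] at hz
  have hneg : HasAngle π (-1) := ⟨1, one_pos, by simp⟩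
  obtain ⟨ψ, ⟨hzψ, hψπ⟩, hψ⟩ := (InSector.add (by linarith [arg_pos_of_im_pos hz])
    ⟨arg z, ⟨le_rfl, (arg_lt_pi_of_im_pos hz).le⟩, hasAngle_arg hz0⟩
    ⟨π, ⟨(arg_lt_pi_of_im_pos hz).le, le_rfl⟩, hneg⟩ : InSector (arg z) π (z + -1))
  refine ⟨ψ, hzψ, hψπ.lt_of_ne fun h => ?_, by simpa [sub_eq_add_neg] using hψ⟩
  have := hψ.im_eq
  rw [h, Real.sin_pi, mul_zero] at this
  simp at this
  linarith

def HasMonotoneAngles (φ : ℝ) (n : ℕ) (v : ℕ → ℂ) : Prop :=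
  ∃ θ : ℕ → ℝ, MonotoneOn θ (Set.Iic n) ∧ θ n ≤ θ 0 + φ ∧ ∀ i ≤ n, HasAngle (θ i) (v i)

theorem inSector_eulerStep {n : ℕ} {v : ℕ → ℂ} {θ : ℕ → ℝ} (hz : 0 < z.im)
    (hθ : MonotoneOn θ (Set.Iic n)) (hθn : θ n ≤ θ 0 + arg z)
    (hv : ∀ i ≤ n, HasAngle (θ i) (v i)) {k : ℕ} (hk : k ≤ n) :
    InSector (θ k) (θ k + arg z) (eulerStep z n v k) := by
  have hφ := arg_lt_pi_of_im_pos hz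
  have hz0 : z ≠ 0 := fun h => by simp [h] at hz
  have hmono : ∀ {i j}, i ≤ j → j ≤ n → θ i ≤ θ j := fun hij hj =>
    hθ (Set.mem_Iic.2 (hij.trans hj)) (Set.mem_Iic.2 hj) hij
  cases k with
  | zero =>
    rw [eulerStep_zero]
    refine (inSector_sum (by linarith) nonempty_range_add_one fun j hj => ?_).mono le_rfl hθn
    have hj : j ≤ n := Nat.lt_succ_iff.1 (mem_range.1 hj)
    exact ⟨θ j, ⟨hmono j.zero_le hj, hmono hj le_rfl⟩, hv j hj⟩
  | succ k =>
    have hk' : θ k ≤ θ (k + 1) := hmono k.le_succ hk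
    have htop : θ (k + 1) ≤ θ 0 + arg z := (hmono hk le_rfl).trans hθn
    have hlow : InSector (θ (k + 1)) (θ k + arg z) (z * ∑ j ∈ range (k + 1), v j) := by
      rw [mul_sum]
      refine inSector_sum (by linarith) nonempty_range_add_one fun j hj => ?_
      have hj : j ≤ k := Nat.lt_succ_iff.1 (mem_range.1 hj)
      have h0j : θ 0 ≤ θ j := hmono j.zero_le (by omega)
      have hjk : θ j ≤ θ k := hmono hj (by omega)
      exact ⟨arg z + θ j, ⟨by linarith, by linarith⟩, (hasAngle_arg hz0).mul (hv j (by omega))⟩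
    have hhigh : InSector (θ (k + 1)) (θ k + arg z) (∑ j ∈ Ico (k + 1) (n + 1), v j) := by
      refine inSector_sum (by linarith) (nonempty_Ico.2 (by omega)) fun j hj => ?_
      obtain ⟨hkj, hjn⟩ := mem_Ico.1 hj
      have hθj : θ j ≤ θ n := hmono (by omega) le_rfl
      have h0k : θ 0 ≤ θ k := hmono k.zero_le (by omega)
      exact ⟨θ j, ⟨hmono hkj (by omega), by linarith⟩, hv j (by omega)⟩
    rw [eulerStep]
    exact (hlow.add (by linarith) hhigh).mono le_rfl (by linarith)

theorem HasMonotoneAngles.eulerStep {n : ℕ} {v : ℕ → ℂ} (hz : 0 < z.im)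
    (h : HasMonotoneAngles (arg z) n v) :
    HasMonotoneAngles (arg z) (n + 1) (eulerStep z n v) := by
  obtain ⟨θ, hθ, hθn, hv⟩ := h
  obtain ⟨ψ, hzψ, hψπ, hψ⟩ := exists_hasAngle_sub_one hz
  have hφ := arg_lt_pi_of_im_pos hz
  have hz0 : z ≠ 0 := fun h => by simp [h] at hz
  have hmono : ∀ {i j}, i ≤ j → j ≤ n → θ i ≤ θ j := fun hij hj =>
    hθ (Set.mem_Iic.2 (hij.trans hj)) (Set.mem_Iic.2 hj) hij
  set w := _root_.eulerStep z n v with hw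
  -- the new values have angles in `[θ 0, θ 0 + 2 * arg z] ⊆ (c - π, c + π)`
  set c := θ 0 + arg z
  set θ' : ℕ → ℝ := fun i => angleNear c (w i)
  have hsec : ∀ k ≤ n, w k ≠ 0 ∧ θ k ≤ θ' k ∧ θ' k ≤ θ k + arg z := fun k hk =>
    have hs := inSector_eulerStep hz hθ hθn hv hk
    ⟨hs.ne_zero, hs.angleNear_mem (by linarith [hmono k.zero_le hk])
      (by linarith [hmono hk le_rfl])⟩
  have hne : ∀ i ≤ n + 1, w i ≠ 0 := by
    intro i hi
    rcases hi.lt_or_eq with hi | rfl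
    · exact (hsec i (by omega)).1
    · rw [hw, eulerStep_last]
      exact mul_ne_zero hz0 (hsec 0 n.zero_le).1
  have hangle : ∀ i ≤ n + 1, HasAngle (θ' i) (w i) := fun i hi =>
    hasAngle_angleNear (hne i hi) c
  have htop : θ' (n + 1) = θ' 0 + arg z := by
    have h0 := hsec 0 n.zero_le
    have : HasAngle (θ' 0 + arg z) (w (n + 1)) := by
      rw [hw, eulerStep_last, add_comm]
      exact (hasAngle_arg hz0).mul (hangle 0 (by omega))
    exact this.angleNear_eq (by linarith) (by linarith)
  have hstep : ∀ k ≤ n, θ' k ≤ θ' (k + 1) := by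
    intro k hk
    obtain ⟨-, hlo, hhi⟩ := hsec k hk
    have h0k := hmono k.zero_le hk
    have hkn := hmono hk le_rfl
    have hs : InSector (θ' k) (θ k + ψ) (w (k + 1)) := by
      rw [hw, eulerStep_succ z n v hk]
      exact InSector.add (by linarith) ⟨θ' k, ⟨le_rfl, by linarith⟩, hangle k (by omega)⟩
        ⟨ψ + θ k, ⟨by linarith, by linarith⟩, hψ.mul (hv k hk)⟩
    exact (hs.angleNear_mem (by linarith) (by linarith)).1
  exact ⟨θ', monotoneOn_of_le_add_one Set.ordConnected_Iic fun k _ _ hk =>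
    hstep k (by simpa using hk), htop.le, hangle⟩

end MonotoneAngles

section Series

theorem coeff_zero_one_sub_X_mul {R : Type*} [Ring R] (g : PowerSeries R) :
    PowerSeries.coeff 0 ((1 - PowerSeries.X) * g) = PowerSeries.coeff 0 g := by
  rw [sub_mul, one_mul, map_sub, PowerSeries.coeff_zero_X_mul, sub_zero]

theorem coeff_succ_one_sub_X_mul {R : Type*} [Ring R] (g : PowerSeries R) (m : ℕ) :
    PowerSeries.coeff (m + 1) ((1 - PowerSeries.X) * g) =
      PowerSeries.coeff (m + 1) g - PowerSeries.coeff m g := by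
  rw [sub_mul, one_mul, map_sub, PowerSeries.coeff_succ_X_mul]

theorem sum_range_pow_mul_pow_of_eq_add_one {R : Type*} [CommRing R] {u v : R} (huv : v = u + 1)
    {n i : ℕ} (hi : i ≤ n + 1) :
    ∑ j ∈ range i, u ^ j * v ^ (n - j) = v ^ (n + 1) - u ^ i * v ^ (n + 1 - i) := by
  induction i with
  | zero => simp
  | succ i ih =>
    rw [sum_range_succ, ih (by omega), show n + 1 - i = n - i + 1 by omega,
      show n + 1 - (i + 1) = n - i by omega, huv]
    ring

def basisSeries (n i : ℕ) : PowerSeries ℝ :=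
  PowerSeries.mk fun m => (m : ℝ) ^ i * (1 + m) ^ (n - i)

theorem one_sub_X_mul_basisSeries {n i : ℕ} (hi : i ≤ n + 1) :
    (1 - PowerSeries.X) * basisSeries (n + 1) i = eulerStep PowerSeries.X n (basisSeries n) i := by
  ext m
  rcases m with _ | m
  · rw [coeff_zero_one_sub_X_mul, eulerStep, map_add, PowerSeries.coeff_zero_X_mul, map_sum]
    simp only [basisSeries, PowerSeries.coeff_mk, CharP.cast_eq_zero, add_zero, one_pow, mul_one,
      zero_add]
    rcases i with _ | i
    · rw [sum_eq_sum_Ico_succ_bot n.succ_pos, sum_eq_zero fun j hj => zero_pow (by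
        have := (mem_Ico.1 hj).1; omega)]
      simp
    · exact (zero_pow i.succ_ne_zero).trans (sum_eq_zero fun j hj => zero_pow (by
        have := (mem_Ico.1 hj).1; omega)).symm
  · rw [coeff_succ_one_sub_X_mul, eulerStep, map_add, PowerSeries.coeff_succ_X_mul, map_sum,
      map_sum]
    simp only [basisSeries, PowerSeries.coeff_mk]
    rw [sum_range_pow_mul_pow_of_eq_add_one (by ring) hi, sum_Ico_eq_sub _ hi,
      sum_range_pow_mul_pow_of_eq_add_one (by ring) le_rfl,
      sum_range_pow_mul_pow_of_eq_add_one (by ring) hi]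
    push_cast
    rw [Nat.sub_self, pow_zero]
    ring

end Series

/-- `eulerianBasis n i = 𝒟ₙ(xⁱ(1+x)ⁿ⁻ⁱ)` (see `coe_eulerianBasis`), defined by its recurrence. -/
def eulerianBasis : ℕ → ℕ → ℝ[X]
  | 0 => fun i => if i = 0 then 1 else 0
  | n + 1 => eulerStep Polynomial.X n (eulerianBasis n)

theorem coe_eulerianBasis {n i : ℕ} (hi : i ≤ n) :
    (eulerianBasis n i : PowerSeries ℝ) = (1 - PowerSeries.X) ^ (n + 1) * basisSeries n i := by
  induction n generalizing i with
  | zero =>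
    obtain rfl : i = 0 := by omega
    ext m
    rcases m with _ | m
    · simp [eulerianBasis, basisSeries]
    · simp [eulerianBasis, basisSeries, coeff_succ_one_sub_X_mul]
  | succ n ih =>
    rw [eulerianBasis, ← Polynomial.coeToPowerSeries.ringHom_apply, map_eulerStep,
      Polynomial.coeToPowerSeries.ringHom_apply, Polynomial.coe_X]
    simp only [Polynomial.coeToPowerSeries.ringHom_apply]
    rw [eulerStep_congr _ _ _ (fun j hj => ih hj) hi, eulerStep_const_mul,
      ← one_sub_X_mul_basisSeries hi]
    ring

theorem coe_sum_C_mul_eulerianBasis (c : ℕ → ℝ) (n : ℕ) :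
    ((∑ i ∈ range (n + 1), Polynomial.C (c i) * eulerianBasis n i : ℝ[X]) : PowerSeries ℝ) =
      (1 - PowerSeries.X) ^ (n + 1) * PowerSeries.mk fun m =>
        ∑ i ∈ range (n + 1), c i * (m : ℝ) ^ i * (1 + (m : ℝ)) ^ (n - i) := by
  have hmk : (PowerSeries.mk fun m =>
      ∑ i ∈ range (n + 1), c i * (m : ℝ) ^ i * (1 + (m : ℝ)) ^ (n - i)) =
        ∑ i ∈ range (n + 1), PowerSeries.C (c i) * basisSeries n i := by
    ext m
    simp [basisSeries, mul_assoc]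
  rw [hmk, mul_sum, ← Polynomial.coeToPowerSeries.ringHom_apply, map_sum]
  refine sum_congr rfl fun i hi => ?_
  rw [map_mul, Polynomial.coeToPowerSeries.ringHom_apply,
    Polynomial.coeToPowerSeries.ringHom_apply, Polynomial.coe_C,
    coe_eulerianBasis (Nat.lt_succ_iff.1 (mem_range.1 hi))]
  ring

section Roots

open Complex ComplexConjugate
open scoped Real

theorem HasMonotoneAngles.sum_ne_zero {φ : ℝ} {n : ℕ} {v : ℕ → ℂ}
    (h : HasMonotoneAngles φ n v) (hφ : φ < π) {c : ℕ → ℝ} (hc : ∀ i ≤ n, 0 ≤ c i)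
    (hk : ∃ k ≤ n, c k ≠ 0) : ∑ i ∈ range (n + 1), (c i : ℂ) * v i ≠ 0 := by
  obtain ⟨θ, hθ, hθn, hv⟩ := h
  obtain ⟨k, hkn, hck⟩ := hk
  rw [← sum_filter_ne_zero]
  refine (inSector_sum (a := θ 0) (b := θ n) (by linarith) ⟨k, ?_⟩ fun i hi => ?_).ne_zero
  · exact mem_filter.2 ⟨mem_range.2 (by omega),
      mul_ne_zero (ofReal_ne_zero.2 hck) (hv k hkn).ne_zero⟩
  · obtain ⟨hi, hne⟩ := mem_filter.1 hi
    have hin : i ≤ n := Nat.lt_succ_iff.1 (mem_range.1 hi)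
    have hci : 0 < c i := (hc i hin).lt_of_ne' (ofReal_ne_zero.1 (left_ne_zero_of_mul hne))
    exact ⟨θ i, ⟨hθ (Set.mem_Iic.2 n.zero_le) (Set.mem_Iic.2 hin) i.zero_le,
      hθ (Set.mem_Iic.2 hin) (Set.mem_Iic.2 le_rfl) hin⟩, (hv i hin).ofReal_mul hci⟩

theorem hasMonotoneAngles_eulerianBasis {z : ℂ} (hz : 0 < z.im) (n : ℕ) :
    HasMonotoneAngles (arg z) n fun i => Polynomial.aeval z (eulerianBasis n i) := by
  induction n with
  | zero =>
    refine ⟨fun _ => 0, fun _ _ _ _ _ => le_rfl, by linarith [arg_pos_of_im_pos hz], ?_⟩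
    intro i hi
    obtain rfl : i = 0 := by omega
    simpa [eulerianBasis] using hasAngle_exp 0
  | succ n ih =>
    simp only [eulerianBasis, map_eulerStep, Polynomial.aeval_X]
    exact ih.eulerStep hz

theorem realRooted_of_aeval_ne_zero {p : ℝ[X]}
    (hp : ∀ z : ℂ, 0 < z.im → Polynomial.aeval z p ≠ 0) : RealRooted p := by
  refine Or.inr fun z hz => ?_
  have hroot : Polynomial.aeval z p = 0 := by
    rw [mem_roots', IsRoot, eval_map, ← aeval_def] at hz
    exact hz.2
  by_contra him
  rcases lt_or_gt_of_ne him with hneg | hpos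
  · exact hp (conj z) (by simpa using hneg) (by rw [Polynomial.aeval_conj, hroot, map_zero])
  · exact hp z hpos hroot

end Roots

theorem statement0_general (n : ℕ)
    (c : ℕ → ℝ) (hc : ∀ i ≤ n, 0 ≤ c i)
    (D : Polynomial ℝ)
    (hD : (D : PowerSeries ℝ) =
      (1 - PowerSeries.X) ^ (n + 1) *
        PowerSeries.mk fun m => ∑ i ∈ Finset.range (n + 1),
          c i * (m : ℝ) ^ i * (1 + (m : ℝ)) ^ (n - i)) :
    RealRooted D := by
  have hDsum : D = ∑ i ∈ range (n + 1), Polynomial.C (c i) * eulerianBasis n i :=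
    Polynomial.coe_inj.1 (hD.trans (coe_sum_C_mul_eulerianBasis c n).symm)
  by_cases hc0 : ∃ k ≤ n, c k ≠ 0
  · refine realRooted_of_aeval_ne_zero fun z hz => ?_
    simp only [hDsum, map_sum, map_mul, Polynomial.aeval_C, Complex.coe_algebraMap]
    exact (hasMonotoneAngles_eulerianBasis hz n).sum_ne_zero (arg_lt_pi_of_im_pos hz) hc hc0
  · left
    rw [hDsum]
    refine sum_eq_zero fun i hi => ?_
    rw [not_not.1 fun h => hc0 ⟨i, Nat.lt_succ_iff.1 (mem_range.1 hi), h⟩, map_zero, zero_mul]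

/-- Theorem 1.1(a), Brändén: if `h = c₀ + c₁x + ⋯ + cₙxⁿ` has
nonnegative coefficients, then `𝒟ₙ(h)`, defined by
`∑_{m ≥ 0} f(m) xᵐ = 𝒟ₙ(h)(x)/(1−x)^(n+1)` with `f(x) = ∑ cᵢ xⁱ (1+x)^(n−i)`,
has only real roots. -/
theorem statement0 (n : ℕ)
    (c : ℕ → ℝ) (hc : ∀ i ≤ n, 0 ≤ c i)
    (h : Polynomial ℝ)
    (hh : h = ∑ i ∈ Finset.range (n + 1), Polynomial.C (c i) * Polynomial.X ^ i)
    (D : Polynomial ℝ) (hDdeg : D.natDegree ≤ n)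
    (hD : (D : PowerSeries ℝ) =
      (1 - PowerSeries.X) ^ (n + 1) *
        PowerSeries.mk fun m => ∑ i ∈ Finset.range (n + 1),
          c i * (m : ℝ) ^ i * (1 + (m : ℝ)) ^ (n - i)) :
    RealRooted D :=
  statement0_general n c hc D hD
end
end

section
/- Let n ≥ 1 and let p_0, p_1, ..., p_n ∈ ℝ[x] satisfy: deg p_i ≤ n−1 and x^{n−1}·p_i(1/x) = p_{n−1−i}(x) for all 0 ≤ i ≤ n−1; deg p_n ≤ n and x^n·p_n(1/x) = p_n(x). For 0 ≤ k ≤ n set q_k(x) = x·∑_{i=0}^{k−1} p_i(x) + ∑_{i=k}^{n} p_i(x). Then for all reals c_0, ..., c_n, the symmetric decomposition of ∑_{k=0}^n c_k·q_k(x) with respect to n is (a, b), where a(x) = (c_0 + c_1 + ... + c_n)·p_n(x) + ∑_{i=0}^{n−1} (c_0 + c_1 + ... + c_i + (c_0 + c_1 + ... + c_{n−i−1})·x)·p_i(x) and b(x) = ∑_{i=0}^{n−1} (c_n + c_{n−1} + ... + c_{n−i} − c_0 − c_1 − ... − c_i)·p_i(x); that is, ∑_{k=0}^n c_k·q_k(x)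 = a(x) + x·b(x), x^n·a(1/x) = a(x), and x^{n−1}·b(1/x) = b(x). -/
/-! Reflection is additive and, by hypothesis, `reflect (n - 1)` maps the family `p₀, …, pₙ₋₁`
to itself in reverse order. So `∑ γᵢ pᵢ` is self-reciprocal as soon as `γₙ₋₁₋ᵢ = γᵢ`; for `a`
the factor `Sᵢ₊₁ + Sₙ₋ᵢ x` (with `Sₘ = c₀ + ⋯ + cₘ₋₁`) is reflected into `Sₙ₋ᵢ + Sᵢ₊₁ x`, and the
coefficient of `pᵢ` in `b` equals `Sₙ₊₁ - Sₙ₋ᵢ - Sᵢ₊₁`, which is symmetric in `i ↔ n - 1 - i`.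
The identity `∑ cₖ qₖ = a + x b` is an exchange of the order of summation. -/

open Polynomial PowerSeries Finset

noncomputable section

namespace Polynomial

variable {R : Type*} [Semiring R]

theorem reflect_sum {ι : Type*} (s : Finset ι) (f : ι → R[X]) (N : ℕ) :
    (∑ i ∈ s, f i).reflect N = ∑ i ∈ s, (f i).reflect N :=
  map_sum ({ toFun := reflect N, map_zero' := reflect_zero, map_add' := fun f g => reflect_add f g N }
    : R[X] →+ R[X]) f s

theorem reflect_sum_range_eq_self {N m : ℕ} {g : ℕ → R[X]}
    (hg : ∀ i < m, (g i).reflect N = g (m - 1 - i)) :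
    (∑ i ∈ range m, g i).reflect N = ∑ i ∈ range m, g i := by
  rw [reflect_sum, ← sum_range_reflect g m]
  exact sum_congr rfl fun i hi => hg i (mem_range.mp hi)

theorem coeff_sub_eq_coeff_of_reflect_eq {N i : ℕ} {q : R[X]} (h : q.reflect N = q) (hi : i ≤ N) :
    q.coeff (N - i) = q.coeff i := by
  conv_rhs => rw [← h]
  rw [coeff_reflect, revAt_le hi]

theorem natDegree_C_add_C_mul_X_mul_le {N : ℕ} (a b : R) {q : R[X]} (hq : q.natDegree < N) :
    ((C a + C b * X) * q).natDegree ≤ N := by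
  have : (C a + C b * X).natDegree ≤ 1 := by compute_degree
  have := natDegree_mul_le (p := C a + C b * X) (q := q)
  omega

theorem reflect_C_add_C_mul_X_mul {N : ℕ} (a b : R) {q : R[X]} (hq : q.natDegree < N) :
    ((C a + C b * X) * q).reflect N = (C b + C a * X) * q.reflect (N - 1) := by
  have hlin : (C a + C b * X).natDegree ≤ 1 := by compute_degree
  obtain ⟨M, rfl⟩ : ∃ M, N = 1 + M := ⟨N - 1, by omega⟩
  rw [reflect_mul _ _ hlin (by omega : q.natDegree ≤ M), Nat.add_sub_cancel_left, reflect_add,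
    reflect_C_mul, reflect_C, reflect_one_X]
  simp [add_comm]

section PalindromicFamily

variable {n : ℕ} {p : ℕ → R[X]}

theorem reflect_sum_C_mul_eq_self (hsym : ∀ i < n, (p i).reflect (n - 1) = p (n - 1 - i))
    {β : ℕ → R} (hβ : ∀ i < n, β (n - 1 - i) = β i) :
    (∑ i ∈ range n, C (β i) * p i).reflect (n - 1) = ∑ i ∈ range n, C (β i) * p i :=
  reflect_sum_range_eq_self fun i hi => by rw [reflect_C_mul, hsym i hi, hβ i hi]

theorem reflect_sum_C_add_C_mul_X_mul_eq_self (hdeg : ∀ i < n, (p i).natDegree ≤ n - 1)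
    (hsym : ∀ i < n, (p i).reflect (n - 1) = p (n - 1 - i)) {α α' : ℕ → R}
    (hα : ∀ i < n, α' i = α (n - 1 - i)) :
    (∑ i ∈ range n, (C (α i) + C (α' i) * X) * p i).reflect n =
      ∑ i ∈ range n, (C (α i) + C (α' i) * X) * p i := by
  refine reflect_sum_range_eq_self fun i hi => ?_
  rw [reflect_C_add_C_mul_X_mul _ _ (by have := hdeg i hi; omega), hsym i hi, hα i hi,
    hα (n - 1 - i) (by omega), show n - 1 - (n - 1 - i) = i by omega]

end PalindromicFamily

end Polynomial

section PartialSums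

variable {A : Type*}

theorem Finset.sum_range_succ_comp_sub [AddCommGroup A] (c : ℕ → A) {i n : ℕ} (h : i ≤ n) :
    ∑ j ∈ range (i + 1), c (n - j) = ∑ j ∈ range (n + 1), c j - ∑ j ∈ range (n - i), c j := by
  rw [eq_sub_iff_add_eq', show n + 1 = n - i + (i + 1) by omega, sum_range_add c (n - i) (i + 1),
    ← sum_range_reflect (fun j => c (n - i + j)) (i + 1)]
  refine congrArg _ (sum_congr rfl fun j hj => ?_)
  rw [mem_range] at hj
  congr 1
  omega

variable [CommSemiring A]

theorem Finset.sum_range_succ_mul_sum_range (c p : ℕ → A) (n : ℕ) :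
    ∑ k ∈ range (n + 1), c k * ∑ i ∈ range k, p i =
      ∑ i ∈ range n, (∑ k ∈ Ico (i + 1) (n + 1), c k) * p i := by
  simp only [mul_sum, sum_mul]
  exact sum_comm' (by intro k i; simp only [mem_range, mem_Ico]; omega)

theorem Finset.sum_range_succ_mul_sum_Icc (c p : ℕ → A) (n : ℕ) :
    ∑ k ∈ range (n + 1), c k * ∑ i ∈ Icc k n, p i =
      ∑ i ∈ range (n + 1), (∑ k ∈ range (i + 1), c k) * p i := by
  simp only [mul_sum, sum_mul]
  exact sum_comm' (by intro k i; simp only [mem_range, mem_Icc]; omega)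

end PartialSums

theorem sum_mul_X_mul_sum_range_add_sum_Icc {A : Type*} [CommRing A] (x : A) (c p : ℕ → A)
    (n : ℕ) :
    ∑ k ∈ range (n + 1), c k * (x * ∑ i ∈ range k, p i + ∑ i ∈ Icc k n, p i) =
      ((∑ k ∈ range (n + 1), c k) * p n +
        ∑ i ∈ range n, (∑ j ∈ range (i + 1), c j + (∑ j ∈ range (n - i), c j) * x) * p i) +
      x * ∑ i ∈ range n, (∑ j ∈ range (i + 1), c (n - j) - ∑ j ∈ range (i + 1), c j) * p i := by
  rw [sum_congr rfl fun k _ => mul_add (c k) _ _, sum_add_distrib]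
  simp only [mul_left_comm _ x, ← mul_sum]
  rw [sum_range_succ_mul_sum_range, sum_range_succ_mul_sum_Icc, sum_range_succ _ n]
  have termwise : ∑ i ∈ range n, (x * ((∑ k ∈ Ico (i + 1) (n + 1), c k) * p i) +
        (∑ k ∈ range (i + 1), c k) * p i) =
      ∑ i ∈ range n, ((∑ j ∈ range (i + 1), c j + (∑ j ∈ range (n - i), c j) * x) * p i +
        x * ((∑ j ∈ range (i + 1), c (n - j) - ∑ j ∈ range (i + 1), c j) * p i)) := by
    refine sum_congr rfl fun i hi => ?_
    rw [mem_range] at hi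
    rw [sum_Ico_eq_sub _ (by omega), sum_range_succ_comp_sub c hi.le]
    ring
  rw [sum_add_distrib, sum_add_distrib, ← mul_sum, ← mul_sum] at termwise
  linear_combination termwise

theorem statement14_general (n : ℕ) (p : ℕ → Polynomial ℝ)
    (hdeg : ∀ i < n, (p i).natDegree ≤ n - 1)
    (hsym : ∀ i < n, (p i).reflect (n - 1) = p (n - 1 - i))
    (hdegn : (p n).natDegree ≤ n)
    (hsymn : (p n).reflect n = p n)
    (c : ℕ → ℝ) :
    IsSymmDecomp n
      (∑ k ∈ Finset.range (n + 1), Polynomial.C (c k) *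
        (Polynomial.X * (∑ i ∈ Finset.range k, p i) + ∑ i ∈ Finset.Icc k n, p i))
      (Polynomial.C (∑ k ∈ Finset.range (n + 1), c k) * p n +
        ∑ i ∈ Finset.range n,
          (Polynomial.C (∑ j ∈ Finset.range (i + 1), c j) +
            Polynomial.C (∑ j ∈ Finset.range (n - i), c j) * Polynomial.X) * p i)
      (∑ i ∈ Finset.range n,
        Polynomial.C ((∑ j ∈ Finset.range (i + 1), c (n - j)) -
          ∑ j ∈ Finset.range (i + 1), c j) * p i) := by
  have hα : ∀ i < n, ∑ j ∈ range (n - i), c j = ∑ j ∈ range (n - 1 - i + 1), c j :=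
    fun i hi => by rw [show n - 1 - i + 1 = n - i by omega]
  have hβ : ∀ i < n, ∑ j ∈ range (n - 1 - i + 1), c (n - j) - ∑ j ∈ range (n - 1 - i + 1), c j =
      ∑ j ∈ range (i + 1), c (n - j) - ∑ j ∈ range (i + 1), c j := fun i hi => by
    rw [sum_range_succ_comp_sub c (by omega), sum_range_succ_comp_sub c hi.le,
      show n - 1 - i + 1 = n - i by omega, show n - (n - 1 - i) = i + 1 by omega]
    abel
  refine ⟨?_, ?_, ?_, fun i hi => coeff_sub_eq_coeff_of_reflect_eq ?_ hi,
    fun i hi => coeff_sub_eq_coeff_of_reflect_eq (reflect_sum_C_mul_eq_self hsym hβ) hi⟩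
  · simpa only [map_sum, map_sub] using
      sum_mul_X_mul_sum_range_add_sum_Icc Polynomial.X (fun k => Polynomial.C (c k)) p n
  · refine natDegree_add_le_of_degree_le ((natDegree_C_mul_le _ _).trans hdegn)
      (natDegree_sum_le_of_forall_le _ _ fun i hi => ?_)
    rw [mem_range] at hi
    exact natDegree_C_add_C_mul_X_mul_le _ _ (by have := hdeg i hi; omega)
  · exact natDegree_sum_le_of_forall_le _ _ fun i hi =>
      (natDegree_C_mul_le _ _).trans (hdeg i (mem_range.mp hi))
  · rw [reflect_add, reflect_C_mul, hsymn, reflect_sum_C_add_C_mul_X_mul_eq_self hdeg hsym hα]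

/-- Lemma 4.2: explicit formula for the symmetric decomposition
of `∑ₖ cₖ·qₖ` with respect to `n`. -/
theorem statement14 (n : ℕ) (hn : 1 ≤ n) (p : ℕ → Polynomial ℝ)
    (hdeg : ∀ i < n, (p i).natDegree ≤ n - 1)
    (hsym : ∀ i < n, (p i).reflect (n - 1) = p (n - 1 - i))
    (hdegn : (p n).natDegree ≤ n)
    (hsymn : (p n).reflect n = p n)
    (c : ℕ → ℝ) :
    IsSymmDecomp n
      (∑ k ∈ Finset.range (n + 1), Polynomial.C (c k) *
        (Polynomial.X * (∑ i ∈ Finset.range k, p i) + ∑ i ∈ Finset.Icc k n, p i))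
      (Polynomial.C (∑ k ∈ Finset.range (n + 1), c k) * p n +
        ∑ i ∈ Finset.range n,
          (Polynomial.C (∑ j ∈ Finset.range (i + 1), c j) +
            Polynomial.C (∑ j ∈ Finset.range (n - i), c j) * Polynomial.X) * p i)
      (∑ i ∈ Finset.range n,
        Polynomial.C ((∑ j ∈ Finset.range (i + 1), c (n - j)) -
          ∑ j ∈ Finset.range (i + 1), c j) * p i) :=
  statement14_general n p hdeg hsym hdegn hsymn c
end
end

section
/- For every n ≥ 1, every positive integer r, every k ∈ {0, 1, ..., n} and every j ∈ {0, 1, ..., r−1}, the polynomials p^{⟨r,j⟩}_{n,k} satisfy the recurrence p^{⟨r,j⟩}_{n,k}(x) = x·∑_{ℓ=j+1}^{r−1} ∑_{i=0}^{n−1} p^{⟨r,ℓ⟩}_{n−1,i}(x) + x·∑_{i=0}^{k−1} p^{⟨r,j⟩}_{n−1,i}(x) + ∑_{i=k}^{n−1} p^{⟨r,j⟩}_{n−1,i}(x) + ∑_{ℓ=0}^{j−1} ∑_{i=0}^{n−1} p^{⟨r,ℓ⟩}_{n−1,i}(x). -/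
open Polynomial PowerSeries Finset

noncomputable section

/-- `pnk n k` is the polynomial `p_{n,k} = 𝒟ₙ(xᵏ)`, the polynomial of degree at most `n`
determined by `∑_{m ≥ 0} mᵏ (1+m)^(n−k) xᵐ = p_{n,k}(x)/(1−x)^(n+1)`. -/
def pnk (n k : ℕ) : Polynomial ℝ :=
  PowerSeries.trunc (n + 1)
    ((1 - PowerSeries.X : PowerSeries ℝ) ^ (n + 1) *
      PowerSeries.mk fun m => (m : ℝ) ^ k * (1 + (m : ℝ)) ^ (n - k))

/-- `prjnk r j n k` is the polynomial `p^{⟨r,j⟩}_{n,k} = S^r_j((1+x+⋯+x^(r−1))ⁿ · p_{n,k}(x))`,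
where `S^r_j` is the `j`-th Veronese `r`-section operator; it has degree at most `n`. -/
def prjnk (r j n k : ℕ) : Polynomial ℝ :=
  ∑ m ∈ Finset.range (n + 1),
    Polynomial.C
      (((∑ i ∈ Finset.range r, (Polynomial.X : Polynomial ℝ) ^ i) ^ n * pnk n k).coeff
        (r * m + j)) *
      Polynomial.X ^ m

/-!
Put `E_{n,k} = ∑_m m^k (1+m)^(n-k) x^m`. Since the `(n+1)`-st finite difference of a polynomial
of degree `≤ n` vanishes, the truncation in the definition of `p_{n,k}` is harmless:
`p_{n,k} = (1-x)^(n+1) E_{n,k}`. Splitting the geometric sum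
`∑_{i<n} m^i (1+m)^(n-1-i) = (1+m)^n - m^n` at `i = k` gives
`(1-x) E_{n,k} = x ∑_{i<k} E_{n-1,i} + ∑_{k≤i<n} E_{n-1,i}`, i.e. the case `r = 1`:
`p_{n,k} = x ∑_{i<k} p_{n-1,i} + ∑_{k≤i<n} p_{n-1,i}`.
Multiplying by `(1+x+⋯+x^(r-1))^n` and using `x (1+⋯+x^(r-1)) = (x+⋯+x^(r-1)) + x^r`, the
polynomials `q_{n,k} = (1+⋯+x^(r-1))^n p_{n,k}` satisfy
`q_{n,k} = (x+⋯+x^(r-1)) ∑_{i<n} q_{n-1,i} + x^r ∑_{i<k} q_{n-1,i} + ∑_{k≤i<n} q_{n-1,i}`.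
The section `S^r_j` sends `x^s g` to `S^r_{j-s} g` for `s ≤ j` and to `x S^r_{r+j-s} g` for
`j < s ≤ r + j`; applying it to this identity gives the recurrence.
-/

namespace PowerSeries

variable {R : Type*} [CommRing R]

theorem coeff_add_one_sub_X_pow_mul_mk (f : R → R) (d N : ℕ) :
    coeff (N + d) ((1 - X) ^ d * mk fun m : ℕ => f m) = ((fwdDiff 1)^[d] f) N := by
  induction d generalizing N with
  | zero => simp
  | succ d ih =>
    rw [pow_succ', mul_assoc, sub_mul, one_mul, map_sub, ← add_assoc, coeff_succ_X_mul,
      show N + d + 1 = (N + 1) + d by ring, ih, ih, Function.iterate_succ_apply', fwdDiff]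
    push_cast
    rfl

theorem coe_trunc_one_sub_X_pow_mul_mk_eval {P : R[X]} {d : ℕ} (hP : P.natDegree < d) :
    (trunc d ((1 - X) ^ d * mk fun m : ℕ => P.eval (m : R)) : R⟦X⟧) =
      (1 - X) ^ d * mk fun m : ℕ => P.eval (m : R) := by
  ext N
  rw [Polynomial.coeff_coe, coeff_trunc]
  split_ifs with hN
  · rfl
  · obtain ⟨M, rfl⟩ := Nat.exists_eq_add_of_le (not_lt.mp hN)
    rw [add_comm, coeff_add_one_sub_X_pow_mul_mk P.eval,
      Polynomial.fwdDiff_iter_eq_zero_of_degree_lt hP, Pi.zero_apply]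

end PowerSeries

theorem sum_Ico_pow_mul_one_add_pow {R : Type*} [CommRing R] (x : R) {k n : ℕ}
    (hkn : k ≤ n) :
    ∑ i ∈ Ico k n, x ^ i * (1 + x) ^ (n - 1 - i) = x ^ k * (1 + x) ^ (n - k) - x ^ n := by
  have h := (Commute.all x (1 + x)).geom_sum₂_Ico_mul hkn
  linear_combination -h

theorem sum_range_pow_mul_one_add_pow {R : Type*} [CommRing R] (x : R) {k n : ℕ}
    (hkn : k ≤ n) :
    ∑ i ∈ range k, x ^ i * (1 + x) ^ (n - 1 - i) = (1 + x) ^ n - x ^ k * (1 + x) ^ (n - k) := by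
  have h := sum_range_add_sum_Ico (fun i => x ^ i * (1 + x) ^ (n - 1 - i)) hkn
  have hall := sum_Ico_pow_mul_one_add_pow x (Nat.zero_le n)
  rw [Nat.Ico_zero_eq_range] at hall
  rw [sum_Ico_pow_mul_one_add_pow x hkn, hall] at h
  simp only [pow_zero, one_mul, Nat.sub_zero] at h
  linear_combination h

namespace Polynomial

variable {R : Type*} [Semiring R]

/-- `S^r_j`. For `0 < r` all coefficients `r * m + j` with `m > p.natDegree` vanish, so the sum
is the whole section; for `r = 0` the value is junk. -/
def veroneseSection (r j : ℕ) (p : R[X]) : R[X] :=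
  ∑ m ∈ range (p.natDegree + 1), C (p.coeff (r * m + j)) * X ^ m

theorem coeff_sum_range_C_coeff_mul_X_pow (p : R[X]) (r j N t : ℕ) :
    (∑ m ∈ range N, C (p.coeff (r * m + j)) * X ^ m).coeff t =
      if t < N then p.coeff (r * t + j) else 0 := by
  simp

theorem sum_range_C_coeff_mul_X_pow_eq_veroneseSection {p : R[X]} {r N : ℕ}
    (hp : p.natDegree < r * N) (j : ℕ) :
    ∑ m ∈ range N, C (p.coeff (r * m + j)) * X ^ m = veroneseSection r j p := by
  have hr : 0 < r := Nat.pos_of_ne_zero fun h => by simp [h] at hp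
  ext t
  rw [veroneseSection, coeff_sum_range_C_coeff_mul_X_pow, coeff_sum_range_C_coeff_mul_X_pow]
  split_ifs with h1 h2 h2
  · rfl
  · exact coeff_eq_zero_of_natDegree_lt (by nlinarith)
  · exact (coeff_eq_zero_of_natDegree_lt (by nlinarith)).symm
  · rfl

theorem coeff_veroneseSection {r : ℕ} (hr : 0 < r) (j : ℕ) (p : R[X]) (t : ℕ) :
    (veroneseSection r j p).coeff t = p.coeff (r * t + j) := by
  rw [veroneseSection, coeff_sum_range_C_coeff_mul_X_pow, ite_eq_left_iff]
  exact fun h => (coeff_eq_zero_of_natDegree_lt (by nlinarith)).symm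

theorem veroneseSection_add {r : ℕ} (hr : 0 < r) (j : ℕ) (p q : R[X]) :
    veroneseSection r j (p + q) = veroneseSection r j p + veroneseSection r j q := by
  ext t
  simp only [coeff_add, coeff_veroneseSection hr]

theorem veroneseSection_sum {ι : Type*} {r : ℕ} (hr : 0 < r) (j : ℕ) (s : Finset ι)
    (f : ι → R[X]) :
    veroneseSection r j (∑ i ∈ s, f i) = ∑ i ∈ s, veroneseSection r j (f i) := by
  ext t
  simp only [finsetSum_coeff, coeff_veroneseSection hr]

theorem veroneseSection_X_pow_mul_of_le {r s j : ℕ} (hr : 0 < r) (hsj : s ≤ j) (p : R[X]) :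
    veroneseSection r j (X ^ s * p) = veroneseSection r (j - s) p := by
  ext t
  rw [coeff_veroneseSection hr, coeff_veroneseSection hr, coeff_X_pow_mul', if_pos (by omega)]
  congr 1
  omega

theorem veroneseSection_X_pow_mul_of_lt {r s j : ℕ} (hr : 0 < r) (hjs : j < s) (hs : s ≤ r + j)
    (p : R[X]) :
    veroneseSection r j (X ^ s * p) = X * veroneseSection r (r + j - s) p := by
  ext t
  rw [coeff_veroneseSection hr, coeff_X_pow_mul']
  cases t with
  | zero => simp [hjs.not_ge]
  | succ t =>
    rw [coeff_X_mul, coeff_veroneseSection hr, if_pos (by nlinarith)]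
    congr 1
    rw [Nat.mul_succ]
    omega

theorem veroneseSection_sum_Ico_X_pow_mul {r j : ℕ} (hj : j < r) (p : R[X]) :
    veroneseSection r j ((∑ s ∈ Ico 1 r, X ^ s) * p) =
      X * ∑ l ∈ Ico (j + 1) r, veroneseSection r l p +
        ∑ l ∈ range j, veroneseSection r l p := by
  have hr : 0 < r := by omega
  rw [sum_mul, veroneseSection_sum hr, ← sum_Ico_consecutive _ (by omega : 1 ≤ j + 1) hj,
    add_comm]
  congr 1
  · rw [sum_congr rfl fun s hs => veroneseSection_X_pow_mul_of_lt hr (mem_Ico.mp hs).1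
      (by have := (mem_Ico.mp hs).2; omega) p, ← mul_sum,
      sum_Ico_reflect (fun l => veroneseSection r l p) _ (by omega : r ≤ r + j + 1),
      show r + j + 1 - r = j + 1 by omega, show r + j + 1 - (j + 1) = r by omega]
  · rw [sum_congr rfl fun s hs => veroneseSection_X_pow_mul_of_le hr
      (Nat.lt_succ_iff.mp (mem_Ico.mp hs).2) p,
      sum_Ico_reflect (fun l => veroneseSection r l p) _ le_rfl, range_eq_Ico, Nat.sub_self,
      Nat.add_sub_cancel]

end Polynomial

def eulerSeries (n k : ℕ) : ℝ⟦X⟧ :=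
  PowerSeries.mk fun m => (m : ℝ) ^ k * (1 + (m : ℝ)) ^ (n - k)

theorem coe_pnk {n k : ℕ} (hk : k ≤ n) :
    (pnk n k : ℝ⟦X⟧) = (1 - PowerSeries.X) ^ (n + 1) * eulerSeries n k := by
  have hdeg : (Polynomial.X ^ k * (1 + Polynomial.X) ^ (n - k) : ℝ[X]).natDegree < n + 1 := by
    refine Nat.lt_succ_of_le (natDegree_mul_le.trans ?_)
    calc _ ≤ k + (n - k) * 1 :=
          add_le_add (natDegree_X_pow_le k) (natDegree_pow_le_of_le _ (by compute_degree!))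
      _ = n := by omega
  have h := PowerSeries.coe_trunc_one_sub_X_pow_mul_mk_eval hdeg
  simp only [eval_mul, eval_pow, eval_X, eval_add, eval_one] at h
  exact h

theorem one_sub_X_mul_eulerSeries_succ {n k : ℕ} (hk : k ≤ n + 1) :
    (1 - PowerSeries.X) * eulerSeries (n + 1) k =
      PowerSeries.X * ∑ i ∈ range k, eulerSeries n i +
        ∑ i ∈ Ico k (n + 1), eulerSeries n i := by
  ext m
  rw [sub_mul, one_mul, map_sub, map_add, map_sum]
  simp only [eulerSeries, PowerSeries.coeff_mk]
  have hIco := sum_Ico_pow_mul_one_add_pow (m : ℝ) hk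
  rw [Nat.add_sub_cancel] at hIco
  rw [hIco]
  cases m with
  | zero => simp
  | succ m =>
    have hrange := sum_range_pow_mul_one_add_pow (m : ℝ) hk
    rw [Nat.add_sub_cancel] at hrange
    simp only [PowerSeries.coeff_succ_X_mul, map_sum, PowerSeries.coeff_mk, hrange]
    push_cast
    ring

theorem pnk_succ {n k : ℕ} (hk : k ≤ n + 1) :
    pnk (n + 1) k =
      (X : ℝ[X]) * ∑ i ∈ range k, pnk n i + ∑ i ∈ Ico k (n + 1), pnk n i := by
  apply Polynomial.coe_injective
  have hcoe : ∀ s : Finset ℕ, (∀ i ∈ s, i ≤ n) →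
      ((∑ i ∈ s, pnk n i : ℝ[X]) : ℝ⟦X⟧) =
        (1 - PowerSeries.X) ^ (n + 1) * ∑ i ∈ s, eulerSeries n i := fun s hs => by
    rw [← Polynomial.coeToPowerSeries.ringHom_apply, map_sum, mul_sum]
    exact sum_congr rfl fun i hi => coe_pnk (hs i hi)
  push_cast
  rw [coe_pnk hk, pow_succ, mul_assoc, one_sub_X_mul_eulerSeries_succ hk,
    hcoe _ fun i hi => by rw [mem_range] at hi; omega,
    hcoe _ fun i hi => by rw [mem_Ico] at hi; omega]
  ring

theorem natDegree_pnk_le (n k : ℕ) : (pnk n k).natDegree ≤ n :=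
  Nat.lt_succ_iff.mp (PowerSeries.natDegree_trunc_lt _ n)

def qrnk (r n k : ℕ) : ℝ[X] :=
  (∑ i ∈ range r, (X : ℝ[X]) ^ i) ^ n * pnk n k

theorem natDegree_qrnk_lt {r : ℕ} (hr : 0 < r) (n k : ℕ) :
    (qrnk r n k).natDegree < r * (n + 1) := by
  have hgeom : (∑ i ∈ range r, (X : ℝ[X]) ^ i).natDegree ≤ r - 1 :=
    natDegree_sum_le_of_forall_le _ _ fun i hi => by
      rw [natDegree_X_pow]; exact Nat.le_sub_one_of_lt (mem_range.mp hi)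
  have := natDegree_mul_le.trans
    (add_le_add (natDegree_pow_le_of_le n hgeom) (natDegree_pnk_le n k))
  obtain ⟨r, rfl⟩ := Nat.exists_eq_add_of_lt hr
  simp only [qrnk, zero_add, Nat.add_sub_cancel] at this ⊢
  nlinarith

theorem qrnk_succ {r n k : ℕ} (hr : 0 < r) (hk : k ≤ n + 1) :
    qrnk r (n + 1) k =
      (∑ s ∈ Ico 1 r, (X : ℝ[X]) ^ s) * ∑ i ∈ range (n + 1), qrnk r n i +
        (X : ℝ[X]) ^ r * ∑ i ∈ range k, qrnk r n i + ∑ i ∈ Ico k (n + 1), qrnk r n i := by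
  set h := ∑ i ∈ range r, (X : ℝ[X]) ^ i with h_def
  set A := ∑ s ∈ Ico 1 r, (X : ℝ[X]) ^ s
  have h_eq : h = 1 + A := by
    rw [h_def, sum_range_eq_add_Ico _ hr, pow_zero]
  have X_mul_h : (X : ℝ[X]) * h = A + (X : ℝ[X]) ^ r := by
    have h1 := sum_range_succ (fun i => (X : ℝ[X]) ^ i) r
    have h2 := sum_range_succ' (fun i => (X : ℝ[X]) ^ i) r
    simp only [pow_succ, ← sum_mul, pow_zero] at h2
    linear_combination h1 - h2 + h_eq
  have hsum : ∀ s : Finset ℕ, ∑ i ∈ s, qrnk r n i = h ^ n * ∑ i ∈ s, pnk n i :=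
    fun s => by simp only [qrnk, mul_sum]; rfl
  rw [hsum, hsum, hsum, ← sum_range_add_sum_Ico _ hk, qrnk, pnk_succ hk]
  linear_combination (h ^ n * ∑ i ∈ range k, pnk n i) * X_mul_h +
    (h ^ n * ∑ i ∈ Ico k (n + 1), pnk n i) * h_eq

theorem prjnk_eq_veroneseSection {r : ℕ} (hr : 0 < r) (j n k : ℕ) :
    prjnk r j n k = veroneseSection r j (qrnk r n k) :=
  sum_range_C_coeff_mul_X_pow_eq_veroneseSection (natDegree_qrnk_lt hr n k) j

theorem statement15_general (n r : ℕ) (hn : 1 ≤ n) (k j : ℕ)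
    (hk : k ≤ n) (hj : j < r) :
    prjnk r j n k =
      Polynomial.X *
          (∑ l ∈ Finset.Ico (j + 1) r, ∑ i ∈ Finset.range n, prjnk r l (n - 1) i) +
        Polynomial.X * (∑ i ∈ Finset.range k, prjnk r j (n - 1) i) +
        (∑ i ∈ Finset.Ico k n, prjnk r j (n - 1) i) +
        ∑ l ∈ Finset.range j, ∑ i ∈ Finset.range n, prjnk r l (n - 1) i := by
  obtain ⟨n, rfl⟩ := Nat.exists_eq_add_of_le' hn
  have hr : 0 < r := by omega
  simp only [Nat.add_sub_cancel, prjnk_eq_veroneseSection hr, ← veroneseSection_sum hr]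
  rw [qrnk_succ hr hk, veroneseSection_add hr, veroneseSection_add hr,
    veroneseSection_sum_Ico_X_pow_mul hj,
    veroneseSection_X_pow_mul_of_lt hr hj (Nat.le_add_right r j), Nat.add_sub_cancel_left]
  ring

/-- Proposition 5.6: the recurrence satisfied by the polynomials
`p^{⟨r,j⟩}_{n,k}`. -/
theorem statement15 (n r : ℕ) (hn : 1 ≤ n) (hr : 1 ≤ r) (k j : ℕ)
    (hk : k ≤ n) (hj : j < r) :
    prjnk r j n k =
      Polynomial.X *
          (∑ l ∈ Finset.Ico (j + 1) r, ∑ i ∈ Finset.range n, prjnk r l (n - 1) i) +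
        Polynomial.X * (∑ i ∈ Finset.range k, prjnk r j (n - 1) i) +
        (∑ i ∈ Finset.Ico k n, prjnk r j (n - 1) i) +
        ∑ l ∈ Finset.range j, ∑ i ∈ Finset.range n, prjnk r l (n - 1) i :=
  statement15_general n r hn k j hk hj
end
end
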